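/- Let A be an abelian category and τ a preradical of A. Then τ is a radical if and only if Δ(τ) is an idempotent preradical of A^op, and τ is idempotent if and only if Δ(τ) is a radical of A^op, where Δ is the duality assignment τ ↦ (τ*)^op. -/

import Mathlib

open CategoryTheory CategoryTheory.Limits

universe v u

variable {A : Type u} [Category.{v} A] [Abelian A]

/-- The product `τ·σ` of preradicals, represented by `σ ∘ τS : TS ⟶ 1`. -/
noncomputable def preradProd {C : Type u} [Category.{v} C] [Abelian C]
    (τ σ : Subobject (𝟭 C)) : Subobject (𝟭 C) :=
  imageSubobject
    ((Functor.whiskerLeft (σ : C ⥤ C) τ.arrow ≫ σ.arrow :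
      (σ : C ⥤ C) ⋙ (τ : C ⥤ C) ⟶ 𝟭 C))

/-- The coproduct `(σ:τ)` of preradicals: `Ker(1 ⟶ S* ⟶ T*S*)`. -/
noncomputable def preradCoprod {C : Type u} [Category.{v} C] [Abelian C]
    (σ τ : Subobject (𝟭 C)) : Subobject (𝟭 C) :=
  kernelSubobject
    (cokernel.π σ.arrow ≫ Functor.whiskerLeft (cokernel σ.arrow) (cokernel.π τ.arrow) :
      𝟭 C ⟶ cokernel σ.arrow ⋙ cokernel τ.arrow)

/-- The duality assignment `Δ : Pr(A) → Pr(Aᵒᵖ)`, `τ ↦ (τ*)ᵒᵖ`. -/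
noncomputable def preradDelta (τ : Subobject (𝟭 A)) : Subobject (𝟭 Aᵒᵖ) :=
  imageSubobject
    ((NatTrans.op (cokernel.π τ.arrow)) : (cokernel τ.arrow).op ⟶ 𝟭 Aᵒᵖ)

/-!
Taking opposites turns kernels in `A ⥤ A` into cokernels in `Aᵒᵖ ⥤ Aᵒᵖ`, and the image of
`op k` is the opposite of the coimage of `k`. Hence `Δ` exchanges the two operations,
`Δτ · Δσ = Δ(σ : τ)` and `(Δσ : Δτ) = Δ(τ · σ)`, and `Δ` is injective because `τ` is the
kernel of `1 ⟶ τ*`.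
-/

namespace CategoryTheory.NatTrans

variable {C D : Type*} [Category C] [Category D]

instance mono_op_of_epi {F G : C ⥤ D} (α : F ⟶ G) [Epi α] : Mono (NatTrans.op α) :=
  (Functor.opUnopEquiv C D).functor.map_mono α.op

instance epi_op_of_mono {F G : C ⥤ D} (α : F ⟶ G) [Mono α] : Epi (NatTrans.op α) :=
  (Functor.opUnopEquiv C D).functor.map_epi α.op

variable [HasZeroMorphisms D]

lemma op_comp_op_eq_zero {F G H : C ⥤ D} {α : F ⟶ G} {β : G ⟶ H} (w : α ≫ β = 0) :
    NatTrans.op β ≫ NatTrans.op α = 0 := by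
  rw [← NatTrans.op_comp, w]
  rfl

noncomputable def isColimitCokernelCoforkOp {F G H : C ⥤ D} {i : F ⟶ G} {f : G ⟶ H}
    (w : i ≫ f = 0) (h : IsLimit (KernelFork.ofι i w)) :
    IsColimit (CokernelCofork.ofπ (NatTrans.op i) (op_comp_op_eq_zero w)) :=
  isColimitCoforkMapOfIsColimit' (Functor.opUnopEquiv C D).functor _
    (KernelFork.IsLimit.ofιOp i w h)

noncomputable def isLimitKernelForkOp {F G H : C ⥤ D} {f : F ⟶ G} {p : G ⟶ H}
    (w : f ≫ p = 0) (h : IsColimit (CokernelCofork.ofπ p w)) :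
    IsLimit (KernelFork.ofι (NatTrans.op p) (op_comp_op_eq_zero w)) :=
  isLimitForkMapOfIsLimit' (Functor.opUnopEquiv C D).functor _
    (CokernelCofork.IsColimit.ofπOp p w h)

lemma kernelSubobject_le_of_mk_op_le {F P Q : C ⥤ D} {p : F ⟶ P} {q : F ⟶ Q} [Epi p] [Epi q]
    [HasKernel p] [HasKernel q]
    (h : Subobject.mk (NatTrans.op p) ≤ Subobject.mk (NatTrans.op q)) :
    kernelSubobject q ≤ kernelSubobject p := by
  have hfac : q ≫ NatTrans.removeOp (Subobject.ofMkLEMk _ _ h) = p := by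
    ext X
    exact congrArg Quiver.Hom.unop
      (NatTrans.congr_app (Subobject.ofMkLEMk_comp h) (Opposite.op X))
  refine le_kernelSubobject _ _ ?_
  rw [← hfac, ← Category.assoc, kernelSubobject_arrow_comp, zero_comp]

end CategoryTheory.NatTrans

namespace CategoryTheory.Limits

lemma kernelSubobject_eq_mk_of_isLimit {C : Type*} [Category C] [HasZeroMorphisms C]
    {X Y Z : C} {f : X ⟶ Y} [HasKernel f] {i : Z ⟶ X} [Mono i] {w : i ≫ f = 0}
    (h : IsLimit (KernelFork.ofι i w)) :
    kernelSubobject f = Subobject.mk i :=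
  Subobject.mk_eq_mk_of_comm _ _ (IsLimit.conePointUniqueUpToIso (kernelIsKernel f) h)
    (IsLimit.conePointUniqueUpToIso_hom_comp (kernelIsKernel f) h WalkingParallelPair.zero)

variable {C : Type*} [Category C] [Abelian C]

lemma kernelSubobject_cokernel_π_arrow {X : C} (P : Subobject X) :
    kernelSubobject (cokernel.π P.arrow) = P :=
  (kernelSubobject_eq_mk_of_isLimit (Abelian.monoIsKernelOfCokernel
    (CokernelCofork.ofπ _ (cokernel.condition P.arrow)) (cokernelIsCokernel _))).trans P.mk_arrow

lemma exists_iso_cokernel_mk_arrow {X Y P : C} {f : Y ⟶ X} [Mono f] {p : X ⟶ P}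
    {w : f ≫ p = 0} (hp : IsColimit (CokernelCofork.ofπ p w)) :
    ∃ e : cokernel (Subobject.mk f).arrow ≅ P, cokernel.π _ ≫ e.hom = p :=
  ⟨_, IsColimit.comp_coconePointUniqueUpToIso_hom (cokernelIsCokernel _)
    (isCokernelEpiComp hp _ (Subobject.underlyingIso_hom_comp_eq_mk f).symm)
    WalkingParallelPair.one⟩

lemma imageSubobject_epi_comp_mono {X Y Z : C} (e : X ⟶ Z) (m : Z ⟶ Y) [Epi e] [Mono m] :
    imageSubobject (e ≫ m) = Subobject.mk m :=
  have := strongEpi_of_epi e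
  Subobject.mk_eq_mk_of_comm _ _ (image.isoStrongEpiMono e m rfl).symm
    (image.isoStrongEpiMono_inv_comp_mono e m rfl)

end CategoryTheory.Limits

section Preradical

variable {C : Type u} [Category.{v} C] [Abelian C]

lemma preradProd_mk_mk {F G : C ⥤ C} (f : F ⟶ 𝟭 C) (g : G ⟶ 𝟭 C) [Mono f] [Mono g] :
    preradProd (Subobject.mk f) (Subobject.mk g) =
      imageSubobject (Functor.whiskerLeft G f ≫ g) := by
  have hsplit : Functor.whiskerLeft (Subobject.mk g : C ⥤ C) (Subobject.mk f).arrow ≫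
      (Subobject.mk g).arrow = (Functor.whiskerLeft _ (Subobject.underlyingIso f).hom ≫
        Functor.whiskerRight (Subobject.underlyingIso g).hom F) ≫ Functor.whiskerLeft G f ≫ g := by
    have hf := NatTrans.congr_app (Subobject.underlyingIso_hom_comp_eq_mk f)
    have hg := NatTrans.congr_app (Subobject.underlyingIso_hom_comp_eq_mk g)
    simp only [NatTrans.comp_app] at hf hg
    ext X
    simp [← hf, ← hg]
  simp only [preradProd, hsplit, imageSubobject_iso_comp]

lemma preradCoprod_mk_mk_of_isColimit {F G P Q : C ⥤ C} {f : F ⟶ 𝟭 C} {g : G ⟶ 𝟭 C}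
    [Mono f] [Mono g] {p : 𝟭 C ⟶ P} {q : 𝟭 C ⟶ Q} {wp : f ≫ p = 0} {wq : g ≫ q = 0}
    (hp : IsColimit (CokernelCofork.ofπ p wp)) (hq : IsColimit (CokernelCofork.ofπ q wq)) :
    preradCoprod (Subobject.mk f) (Subobject.mk g) =
      kernelSubobject (p ≫ Functor.whiskerLeft P q) := by
  obtain ⟨ef, hef⟩ := exists_iso_cokernel_mk_arrow hp
  obtain ⟨eg, heg⟩ := exists_iso_cokernel_mk_arrow hq
  have hsplit : (cokernel.π (Subobject.mk f).arrow ≫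
      Functor.whiskerLeft (cokernel (Subobject.mk f).arrow) (cokernel.π (Subobject.mk g).arrow)) ≫
        (Functor.whiskerLeft (cokernel (Subobject.mk f).arrow) eg.hom ≫
          Functor.whiskerRight ef.hom Q) = p ≫ Functor.whiskerLeft P q := by
    ext X
    have hef' := NatTrans.congr_app hef
    have heg' := NatTrans.congr_app heg
    simp only [NatTrans.comp_app, Functor.whiskerLeft_app, Functor.whiskerRight_app,
      Category.assoc] at hef' heg' ⊢
    rw [reassoc_of% heg', ← hef', Category.assoc]
    exact congrArg _ (q.naturality (ef.hom.app X)).symm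
  refine (kernelSubobject_comp_mono _
    (Functor.whiskerLeft _ eg.hom ≫ Functor.whiskerRight ef.hom Q)).symm.trans ?_
  simp only [hsplit]

end Preradical

lemma preradDelta_eq_mk (τ : Subobject (𝟭 A)) :
    preradDelta τ = Subobject.mk (NatTrans.op (cokernel.π τ.arrow)) :=
  imageSubobject_mono _

lemma preradDelta_mk {F : A ⥤ A} (f : F ⟶ 𝟭 A) [Mono f] :
    preradDelta (Subobject.mk f) = Subobject.mk (NatTrans.op (cokernel.π f)) := by
  obtain ⟨e, he⟩ := exists_iso_cokernel_mk_arrow (w := cokernel.condition f) (cokernelIsCokernel f)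
  rw [preradDelta_eq_mk]
  refine Subobject.mk_eq_mk_of_comm _ _ (NatIso.op e.symm) ?_
  show NatTrans.op e.inv ≫ _ = _
  rw [← NatTrans.op_comp, ← he, Category.assoc, Iso.hom_inv_id, Category.comp_id]

lemma imageSubobject_op_eq_preradDelta {F : A ⥤ A} (k : 𝟭 A ⟶ F) :
    imageSubobject (NatTrans.op k) = preradDelta (kernelSubobject k) :=
  calc imageSubobject (NatTrans.op k)
      _ = imageSubobject (NatTrans.op (Abelian.factorThruCoimage k) ≫
            NatTrans.op (Abelian.coimage.π k)) := by
        simp only [← NatTrans.op_comp, Abelian.coimage.fac]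
      _ = preradDelta (kernelSubobject k) :=
        (imageSubobject_epi_comp_mono _ _).trans (preradDelta_mk (kernel.ι k)).symm

lemma kernelSubobject_op_eq_preradDelta {F : A ⥤ A} (k : F ⟶ 𝟭 A) :
    kernelSubobject (NatTrans.op k) = preradDelta (imageSubobject k) :=
  calc kernelSubobject (NatTrans.op k)
      _ = kernelSubobject (NatTrans.op (image.ι k) ≫ NatTrans.op (factorThruImage k)) := by
        simp only [← NatTrans.op_comp, image.fac]
      _ = kernelSubobject (NatTrans.op (image.ι k)) := kernelSubobject_comp_mono _ _
      _ = Subobject.mk (NatTrans.op (cokernel.π (image.ι k))) :=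
        kernelSubobject_eq_mk_of_isLimit
          (NatTrans.isLimitKernelForkOp (cokernel.condition _) (cokernelIsCokernel _))
      _ = preradDelta (imageSubobject k) := (preradDelta_mk _).symm

lemma preradDelta_injective : Function.Injective (preradDelta (A := A)) := by
  intro σ τ h
  rw [preradDelta_eq_mk, preradDelta_eq_mk] at h
  rw [← kernelSubobject_cokernel_π_arrow σ, ← kernelSubobject_cokernel_π_arrow τ]
  exact le_antisymm (NatTrans.kernelSubobject_le_of_mk_op_le h.ge)
    (NatTrans.kernelSubobject_le_of_mk_op_le h.le)

lemma preradProd_preradDelta (τ σ : Subobject (𝟭 A)) :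
    preradProd (preradDelta τ) (preradDelta σ) = preradDelta (preradCoprod σ τ) := by
  rw [preradDelta_eq_mk τ, preradDelta_eq_mk σ, preradProd_mk_mk (C := Aᵒᵖ)]
  exact imageSubobject_op_eq_preradDelta
    (cokernel.π σ.arrow ≫ Functor.whiskerLeft _ (cokernel.π τ.arrow))

noncomputable def isColimitCokernelCoforkOpArrow (τ : Subobject (𝟭 A)) :
    IsColimit (CokernelCofork.ofπ (NatTrans.op τ.arrow)
      (NatTrans.op_comp_op_eq_zero (cokernel.condition τ.arrow))) :=
  NatTrans.isColimitCokernelCoforkOp _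
    (Abelian.monoIsKernelOfCokernel (CokernelCofork.ofπ _ (cokernel.condition τ.arrow))
      (cokernelIsCokernel τ.arrow))

lemma preradCoprod_preradDelta (σ τ : Subobject (𝟭 A)) :
    preradCoprod (preradDelta σ) (preradDelta τ) = preradDelta (preradProd τ σ) := by
  rw [preradDelta_eq_mk σ, preradDelta_eq_mk τ, preradCoprod_mk_mk_of_isColimit (C := Aᵒᵖ)
    (isColimitCokernelCoforkOpArrow σ) (isColimitCokernelCoforkOpArrow τ)]
  exact kernelSubobject_op_eq_preradDelta (Functor.whiskerLeft (σ : A ⥤ A) τ.arrow ≫ σ.arrow)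

/-- `τ` is a radical iff `Δτ` is idempotent, and `τ` is idempotent iff `Δτ` is a radical. -/
theorem prerad_radical_idem_iff_delta (τ : Subobject (𝟭 A)) :
    (preradCoprod τ τ = τ ↔ preradProd (preradDelta τ) (preradDelta τ) = preradDelta τ) ∧
      (preradProd τ τ = τ ↔ preradCoprod (preradDelta τ) (preradDelta τ) = preradDelta τ) := by
  rw [preradProd_preradDelta, preradCoprod_preradDelta]
  exact ⟨preradDelta_injective.eq_iff.symm, preradDelta_injective.eq_iff.symm⟩
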